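/- Let X ⊆ ℤ² be a planar clump and let L = (P₁, …, Pₙ) be a loop in X. Then the interior of L is contained in the realization of X: int(L) ⊆ |X|. -/

import Mathlib

open Metric Set

/-- The closed unit square centered at the lattice point `c`. -/
def cube2 (c : ℤ × ℤ) : Set (EuclideanSpace ℝ (Fin 2)) :=
  {x | |x 0 - (c.1 : ℝ)| ≤ 1 / 2 ∧ |x 1 - (c.2 : ℝ)| ≤ 1 / 2}

/-- The realization of a planar cubical set. -/
def real2 (X : Finset (ℤ × ℤ)) : Set (EuclideanSpace ℝ (Fin 2)) :=
  ⋃ c ∈ X, cube2 c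

/-- `x` is a regular point of the realization of `X`: either an interior point, or the
punctured intersection with every sufficiently small ball is contractible. -/
def RegPt2 (X : Finset (ℤ × ℤ)) (x : EuclideanSpace ℝ (Fin 2)) : Prop :=
  x ∈ interior (real2 X) ∨
    ∃ ε₀ > 0, ∀ ε : ℝ, 0 < ε → ε < ε₀ →
      ContractibleSpace ↥((Metric.ball x ε ∩ real2 X) \ {x})

/-- A planar clump: a nonempty regular cubical set with contractible realization. -/
def IsClump2 (X : Finset (ℤ × ℤ)) : Prop :=
  X.Nonempty ∧ (∀ x ∈ real2 X, RegPt2 X x) ∧ ContractibleSpace ↥(real2 X)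

/-- Two-collapsibility: two distinct cells can each be removed leaving a clump. -/
def TwoCollapsible (X : Finset (ℤ × ℤ)) : Prop :=
  ∃ c ∈ X, ∃ c' ∈ X, c ≠ c' ∧ IsClump2 (X.erase c) ∧ IsClump2 (X.erase c')

/-- The center of a cell, as a point of the Euclidean plane. -/
noncomputable def ctr (c : ℤ × ℤ) : EuclideanSpace ℝ (Fin 2) :=
  (WithLp.equiv 2 (Fin 2 → ℝ)).symm ![(c.1 : ℝ), (c.2 : ℝ)]

/-- Adjacency of cells: `ℓ¹`-distance one. -/
def adjCell (p q : ℤ × ℤ) : Prop := |p.1 - q.1| + |p.2 - q.2| = 1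

/-- The nerve of a (cyclic) loop `P 0, …, P (n-1)`: the union of the closed segments joining
the centers of consecutive cells (cyclically). -/
noncomputable def nerve (n : ℕ) (P : ℕ → ℤ × ℤ) : Set (EuclideanSpace ℝ (Fin 2)) :=
  ⋃ i ∈ Finset.range n, segment ℝ (ctr (P i)) (ctr (P ((i + 1) % n)))

/-- The interior of a loop: the realization of its cells together with all bounded connected
components of the complement of its nerve. -/
noncomputable def loopInterior (n : ℕ) (P : ℕ → ℤ × ℤ) : Set (EuclideanSpace ℝ (Fin 2)) :=
  real2 ((Finset.range n).image P) ∪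
    {x | x ∉ nerve n P ∧ Bornology.IsBounded (connectedComponentIn (nerve n P)ᶜ x)}

/-! The realization `K = |X|` is closed and contains the nerve, so a point `y ∉ K` in a bounded
component of the complement of the nerve lies in a bounded component `V` of `Kᶜ`, whose frontier
lies in `K`. Identify the plane with `ℂ`. Since `K` is contractible, `z ↦ z - y` has a continuous
logarithm on `K`; extending it from `∂V` by Tietze and replacing `z - y` on `V` by the exponential
of the extension gives a nonvanishing map on the (contractible) plane, which therefore has a
continuous logarithm. On a circle around `y` enclosing `V` this is a logarithm of `z - y`, which
cannot exist because `z - y` is odd under the antipodal map. -/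

open Complex

theorem exists_continuous_log_of_contractibleSpace {A : Type*} [TopologicalSpace A]
    [ContractibleSpace A] {f : A → ℂ} (hf : Continuous f) (hf0 : ∀ a, f a ≠ 0) :
    ∃ L : A → ℂ, Continuous L ∧ ∀ a, exp (L a) = f a := by
  obtain ⟨a₀, ⟨H⟩⟩ := id_nullhomotopic A
  let f' : C(A, {z : ℂ // z ≠ 0}) := ⟨fun a ↦ ⟨f a, hf0 a⟩, by fun_prop⟩
  let H' : C(unitInterval × A, {z : ℂ // z ≠ 0}) := f'.comp H.symm.toContinuousMap
  have H'_zero : ∀ a, H' (0, a) = ⟨exp (log (f a₀)), exp_ne_zero _⟩ := fun a ↦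
    Subtype.ext (by simp [H', f', exp_log (hf0 a₀)])
  let Λ := isCoveringMap_exp.liftHomotopy H' (.const A (log (f a₀))) H'_zero
  refine ⟨fun a ↦ Λ (1, a), by fun_prop, fun a ↦ ?_⟩
  have hlift := congrFun (isCoveringMap_exp.liftHomotopy_lifts H' (.const A _) H'_zero) (1, a)
  calc exp (Λ (1, a)) = H' (1, a) := congrArg Subtype.val hlift
    _ = f a := by simp [H', f']

theorem not_exists_continuous_log_of_odd {S : Type*} [TopologicalSpace S] [PreconnectedSpace S]
    [Nonempty S] {σ : S → S} (hσ : Continuous σ) (hσσ : ∀ w, σ (σ w) = w) {f : S → ℂ}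
    (hfσ : ∀ w, f (σ w) = -f w) : ¬ ∃ L : S → ℂ, Continuous L ∧ ∀ w, exp (L w) = f w := by
  rintro ⟨L, hL, hLf⟩
  obtain ⟨w₀⟩ := ‹Nonempty S›
  -- `d` is a continuous lift of the constant `-1` through `exp`, hence constant; it is also odd.
  set d : S → ℂ := fun w ↦ L (σ w) - L w
  have hd : ∀ w, exp (d w) = -1 := fun w ↦ by
    have hf0 : f w ≠ 0 := hLf w ▸ exp_ne_zero (L w)
    simp [d, exp_sub, hLf, hfσ, hf0]
  have hconst : d (σ w₀) = d w₀ :=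
    isCoveringMap_exp.const_of_comp (by fun_prop) (fun a a' ↦ Subtype.ext (by simp [hd])) _ _
  have hzero : d w₀ = 0 := by
    have : d (σ w₀) = -d w₀ := by simp [d, hσσ]
    linear_combination (hconst.symm.trans this) / 2
  have := hd w₀
  rw [hzero, exp_zero] at this
  norm_num at this

theorem IsOpen.frontier_connectedComponentIn_subset_compl {X : Type*} [TopologicalSpace X]
    [LocallyConnectedSpace X] {U : Set X} (hU : IsOpen U) (x : X) :
    frontier (connectedComponentIn U x) ⊆ Uᶜ := by
  intro z hz hzU
  obtain ⟨w, hwz, hwx⟩ := mem_closure_iff.mp hz.1 _ hU.connectedComponentIn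
    (mem_connectedComponentIn hzU)
  have hcomp : connectedComponentIn U x = connectedComponentIn U z :=
    (connectedComponentIn_eq hwx).trans (connectedComponentIn_eq hwz).symm
  exact hz.2 (hU.connectedComponentIn.interior_eq.symm ▸ hcomp ▸ mem_connectedComponentIn hzU)

theorem exists_continuous_log_compl_of_frontier {X : Type*} [TopologicalSpace X]
    [ContractibleSpace X] {V : Set X} (hV : IsOpen V) {f : X → ℂ} (hf : Continuous f)
    (hf0 : ∀ z ∉ V, f z ≠ 0) {Θ : X → ℂ} (hΘ : Continuous Θ)
    (hΘf : ∀ z ∈ frontier V, exp (Θ z) = f z) :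
    ∃ L : X → ℂ, Continuous L ∧ ∀ z ∉ V, exp (L z) = f z := by
  classical
  set g : X → ℂ := fun z ↦ if z ∈ V then exp (Θ z) else f z
  have hg : Continuous g := continuous_if (fun z hz ↦ hΘf z hz) hΘ.cexp.continuousOn
    (by rw [show {z | z ∉ V} = Vᶜ from rfl, hV.isClosed_compl.closure_eq]; exact hf.continuousOn)
  obtain ⟨L, hL, hLg⟩ := exists_continuous_log_of_contractibleSpace hg fun z ↦ by
    by_cases hz : z ∈ V
    · simp [g, hz, exp_ne_zero]
    · simpa [g, hz] using hf0 z hz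
  exact ⟨L, hL, fun z hz ↦ by simpa [g, hz] using hLg z⟩

theorem not_exists_continuousOn_log_sphere {E : Type*} [NormedAddCommGroup E] [NormedSpace ℝ E]
    (hE : 1 < Module.rank ℝ E) (e : E →ₗ[ℝ] ℂ) (y : E) {R : ℝ} (hR : 0 < R) :
    ¬ ∃ L : E → ℂ, ContinuousOn L (sphere y R) ∧ ∀ w ∈ sphere y R, exp (L w) = e (w - y) := by
  rintro ⟨L, hL, hLe⟩
  have hconn := isConnected_sphere hE y hR.le
  have : PreconnectedSpace (sphere y R) :=
    isPreconnected_iff_preconnectedSpace.mp hconn.isPreconnected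
  have hσ : ∀ w ∈ sphere y R, (2 : ℝ) • y - w ∈ sphere y R := fun w hw ↦ by
    rw [mem_sphere_iff_norm] at hw ⊢
    rw [show (2 : ℝ) • y - w - y = -(w - y) by module, norm_neg, hw]
  have : Nonempty (sphere y R) := hconn.nonempty.to_subtype
  refine not_exists_continuous_log_of_odd (S := sphere y R)
    (σ := fun w ↦ ⟨(2 : ℝ) • y - w, hσ w w.2⟩) (by fun_prop)
    (fun w ↦ Subtype.ext (by simp only; module)) (f := fun w ↦ e ((w : E) - y)) (fun w ↦ ?_)
    ⟨_, hL.domRestrict, fun w ↦ hLe w w.2⟩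
  rw [← map_neg]
  congr 1
  module

theorem not_isBounded_connectedComponentIn_compl_of_contractibleSpace {E : Type*}
    [NormedAddCommGroup E] [NormedSpace ℝ E] (hE : Module.finrank ℝ E = 2) {K : Set E}
    (hK : IsClosed K) [ContractibleSpace K] {y : E} (hy : y ∉ K) :
    ¬ Bornology.IsBounded (connectedComponentIn Kᶜ y) := by
  intro hV
  have : FiniteDimensional ℝ E := Module.finite_of_finrank_eq_succ hE
  let e : E ≃L[ℝ] ℂ := .ofFinrankEq (hE.trans finrank_real_complex.symm)
  have he : ∀ z, e (z - y) = 0 → z = y := fun z hz ↦ sub_eq_zero.mp (e.map_eq_zero_iff.mp hz)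
  set V := connectedComponentIn Kᶜ y
  have hVopen : IsOpen V := hK.isOpen_compl.connectedComponentIn
  have hyV : y ∈ V := mem_connectedComponentIn hy
  have hfrontier : frontier V ⊆ K := by
    simpa using hK.isOpen_compl.frontier_connectedComponentIn_subset_compl y
  obtain ⟨LK, hLK, hLKe⟩ := exists_continuous_log_of_contractibleSpace (A := K)
    (f := fun z ↦ e (z - y)) (by fun_prop) fun z hz ↦ hy (he z hz ▸ z.2)
  obtain ⟨Θ, hΘ⟩ := ContinuousMap.exists_restrict_eq isClosed_frontier
    ⟨fun z : frontier V ↦ LK ⟨z, hfrontier z.2⟩, by fun_prop⟩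
  have hΘe : ∀ z ∈ frontier V, exp (Θ z) = e (z - y) := fun z hz ↦ by
    have hΘz : Θ z = LK ⟨z, hfrontier hz⟩ := ContinuousMap.congr_fun hΘ ⟨z, hz⟩
    rw [hΘz, hLKe]
  obtain ⟨L, hL, hLe⟩ := exists_continuous_log_compl_of_frontier hVopen (f := fun z ↦ e (z - y))
    (by fun_prop) (fun z hz h ↦ hz (he z h ▸ hyV)) Θ.continuous hΘe
  obtain ⟨R, hR, hVR⟩ := hV.subset_ball_lt 0 y
  have hrank : 1 < Module.rank ℝ E := by
    rw [← Module.finrank_eq_rank, hE]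
    exact_mod_cast one_lt_two
  refine not_exists_continuousOn_log_sphere hrank (e : E →ₗ[ℝ] ℂ) y hR
    ⟨L, hL.continuousOn, fun w hw ↦ hLe w fun hwV ↦ ?_⟩
  simpa [mem_sphere.mp hw] using hVR hwV

theorem adjCell.symm {p q : ℤ × ℤ} (h : adjCell p q) : adjCell q p := by
  rwa [adjCell, abs_sub_comm q.1, abs_sub_comm q.2]

theorem adjCell.abs_sub_le_one {p q : ℤ × ℤ} (h : adjCell p q) :
    |(q.1 : ℝ) - p.1| ≤ 1 ∧ |(q.2 : ℝ) - p.2| ≤ 1 := by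
  have h1 := abs_nonneg (q.1 - p.1)
  have h2 := abs_nonneg (q.2 - p.2)
  rw [adjCell, abs_sub_comm p.1, abs_sub_comm p.2] at h
  constructor <;> exact_mod_cast (by omega)

theorem abs_mul_add_mul_sub_le_half {u v a b : ℝ} (hv : 0 ≤ v) (hv2 : v ≤ 1 / 2) (huv : u + v = 1)
    (hab : |b - a| ≤ 1) : |u * a + v * b - a| ≤ 1 / 2 := by
  rw [show u * a + v * b - a = v * (b - a) by linear_combination a * huv, abs_mul, abs_of_nonneg hv]
  nlinarith [abs_nonneg (b - a)]

theorem smul_add_smul_mem_cube2 {p q : ℤ × ℤ} (h : adjCell p q) {u v : ℝ} (hv : 0 ≤ v)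
    (hv2 : v ≤ 1 / 2) (huv : u + v = 1) : u • ctr p + v • ctr q ∈ cube2 p :=
  ⟨abs_mul_add_mul_sub_le_half hv hv2 huv h.abs_sub_le_one.1,
    abs_mul_add_mul_sub_le_half hv hv2 huv h.abs_sub_le_one.2⟩

theorem segment_subset_cube2_union {p q : ℤ × ℤ} (h : adjCell p q) :
    segment ℝ (ctr p) (ctr q) ⊆ cube2 p ∪ cube2 q := by
  rintro x ⟨u, v, hu, hv, huv, rfl⟩
  rcases le_total v (1 / 2) with hv2 | hv2
  · exact .inl (smul_add_smul_mem_cube2 h hv hv2 huv)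
  · exact .inr (add_comm (v • ctr q) _ ▸
      smul_add_smul_mem_cube2 h.symm hu (by linarith) (by linarith))

theorem isClosed_cube2 (c : ℤ × ℤ) : IsClosed (cube2 c) := by
  rw [cube2, ofPred_and]
  exact (isClosed_le (by fun_prop) continuous_const).inter
    (isClosed_le (by fun_prop) continuous_const)

theorem isClosed_real2 (X : Finset (ℤ × ℤ)) : IsClosed (real2 X) :=
  X.finite_toSet.isClosed_biUnion fun c _ ↦ isClosed_cube2 c

theorem real2_mono {X Y : Finset (ℤ × ℤ)} (h : X ⊆ Y) : real2 X ⊆ real2 Y :=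
  biUnion_subset_biUnion_left (Finset.coe_subset.mpr h)

theorem nerve_subset_real2 {X : Finset (ℤ × ℤ)} {n : ℕ} {P : ℕ → ℤ × ℤ}
    (hmem : ∀ i < n, P i ∈ X) (hadj : ∀ i < n, adjCell (P i) (P ((i + 1) % n))) :
    nerve n P ⊆ real2 X := by
  refine iUnion₂_subset fun i hi ↦ ?_
  have hi : i < n := Finset.mem_range.mp hi
  refine (segment_subset_cube2_union (hadj i hi)).trans (union_subset ?_ ?_)
  · exact subset_biUnion_of_mem (u := cube2) (hmem i hi)
  · exact subset_biUnion_of_mem (u := cube2) (hmem _ (Nat.mod_lt _ (by omega)))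

theorem loopInterior_subset_realization_general (X : Finset (ℤ × ℤ)) (hX : IsClump2 X)
    (n : ℕ) (P : ℕ → ℤ × ℤ)
    (hmem : ∀ i < n, P i ∈ X)
    (hadj : ∀ i < n, adjCell (P i) (P ((i + 1) % n))) :
    loopInterior n P ⊆ real2 X := by
  have : ContractibleSpace (real2 X) := hX.2.2
  rintro x (hx | ⟨-, hbdd⟩)
  · exact real2_mono (Finset.image_subset_iff.mpr fun i hi ↦ hmem i (Finset.mem_range.mp hi)) hx
  · by_contra hxX
    have hcomp : connectedComponentIn (real2 X)ᶜ x ⊆ connectedComponentIn (nerve n P)ᶜ x :=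
      connectedComponentIn_mono x (compl_subset_compl.mpr (nerve_subset_real2 hmem hadj))
    exact not_isBounded_connectedComponentIn_compl_of_contractibleSpace
      finrank_euclideanSpace_fin (isClosed_real2 X) hxX (hbdd.subset hcomp)

/-- The interior of a loop in a planar clump is contained in the realization
of the clump. -/
theorem loopInterior_subset_realization (X : Finset (ℤ × ℤ)) (hX : IsClump2 X)
    (n : ℕ) (hn : 3 ≤ n) (P : ℕ → ℤ × ℤ)
    (hinj : ∀ i < n, ∀ j < n, P i = P j → i = j)
    (hmem : ∀ i < n, P i ∈ X)
    (hadj : ∀ i < n, adjCell (P i) (P ((i + 1) % n))) :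
    loopInterior n P ⊆ real2 X :=
  loopInterior_subset_realization_general X hX n P hmem hadj
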